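/- arXiv:2202.07194 — 3 statements merged into one kernel-verified Lean document; each statement's English description precedes it below -/
import Mathlib

section
/- The bit-flip mechanism satisfies ε-local differential privacy: for any inputs v, v' ∈ [c_l, c_u] and any output z ∈ {z_−, z_+}, Q(z|v) ≤ e^ε · Q(z|v'). -/
/-- The bit-flip mechanism satisfies ε-local differential privacy. -/
theorem stmt1 (ε cl cu : ℝ) (hε : 0 < ε) (hcl : cl < cu)
    (Q : Bool → ℝ → ℝ)
    (hQtrue : ∀ v, Q true v =
      1/2 + (v - (cu + cl)/2) / ((cu - cl) * ((Real.exp ε + 1) / (Real.exp ε - 1))))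
    (hQfalse : ∀ v, Q false v =
      1/2 - (v - (cu + cl)/2) / ((cu - cl) * ((Real.exp ε + 1) / (Real.exp ε - 1)))) :
    ∀ v ∈ Set.Icc cl cu, ∀ v' ∈ Set.Icc cl cu, ∀ z : Bool,
      Q z v ≤ Real.exp ε * Q z v' := by
  have hE : 1 < Real.exp ε := by
    have := Real.exp_lt_exp.mpr hε
    simpa using this
  set E := Real.exp ε with hEdef
  have hE1 : 0 < E - 1 := by linarith
  have hE2 : 0 < E + 1 := by linarith
  have hd : 0 < cu - cl := by linarith
  have hD : 0 < (cu - cl) * ((E + 1) / (E - 1)) := by positivity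
  set D := (cu - cl) * ((E + 1) / (E - 1)) with hDdef
  have key : ((cu - cl)/2) / D = (E - 1) / (2 * (E + 1)) := by
    rw [hDdef]; field_simp
  have hub : ∀ w, cl ≤ w → w ≤ cu → (w - (cu + cl)/2) / D ≤ (E - 1) / (2 * (E + 1)) := by
    intro w h1 h2
    rw [← key]
    exact div_le_div_of_nonneg_right (by linarith) hD.le
  have hlb : ∀ w, cl ≤ w → w ≤ cu → -((E - 1) / (2 * (E + 1))) ≤ (w - (cu + cl)/2) / D := by
    intro w h1 h2
    rw [← key, ← neg_div]
    exact div_le_div_of_nonneg_right (by linarith) hD.le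
  have heq : 1/2 + (E - 1) / (2 * (E + 1)) = E * (1/2 - (E - 1) / (2 * (E + 1))) := by
    field_simp; ring
  intro v hv v' hv' z
  obtain ⟨hv1, hv2⟩ := hv
  obtain ⟨hv1', hv2'⟩ := hv'
  cases z
  · rw [hQfalse, hQfalse]
    have h1 : 1/2 - (v - (cu + cl)/2) / D ≤ 1/2 + (E - 1) / (2 * (E + 1)) := by
      have := hlb v hv1 hv2; linarith
    have h2 : 1/2 - (E - 1) / (2 * (E + 1)) ≤ 1/2 - (v' - (cu + cl)/2) / D := by
      have := hub v' hv1' hv2'; linarith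
    calc 1/2 - (v - (cu + cl)/2) / D ≤ 1/2 + (E - 1) / (2 * (E + 1)) := h1
      _ = E * (1/2 - (E - 1) / (2 * (E + 1))) := heq
      _ ≤ E * (1/2 - (v' - (cu + cl)/2) / D) :=
        mul_le_mul_of_nonneg_left h2 (by linarith)
  · rw [hQtrue, hQtrue]
    have h1 : 1/2 + (v - (cu + cl)/2) / D ≤ 1/2 + (E - 1) / (2 * (E + 1)) := by
      have := hub v hv1 hv2; linarith
    have h2 : 1/2 - (E - 1) / (2 * (E + 1)) ≤ 1/2 + (v' - (cu + cl)/2) / D := by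
      have := hlb v' hv1' hv2'; linarith
    calc 1/2 + (v - (cu + cl)/2) / D ≤ 1/2 + (E - 1) / (2 * (E + 1)) := h1
      _ = E * (1/2 - (E - 1) / (2 * (E + 1))) := heq
      _ ≤ E * (1/2 + (v' - (cu + cl)/2) / D) :=
        mul_le_mul_of_nonneg_left h2 (by linarith)
end

section
/- For θ with c_l < θ < c_u, the probability Ψ_ε(θ) that the bit-flip output of the truncated asymmetric Laplace variable equals 1 has derivative Ψ'_ε(θ) = (1/(C_ε(c_u−c_l)))·(1 − α·exp(((1−α)/σ)(c_l−θ)) − (1−α)·exp(−(α/σ)(c_u−θ))), and this derivative satisfies 0 < Ψ'_ε(θ) < 1/(C_ε(c_u−c_l)). -/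
/-- Check loss for the `α`-quantile. -/
noncomputable def checkLoss (α τ : ℝ) : ℝ := if τ ≤ 0 then (α - 1) * τ else α * τ

/-- Density of the asymmetric Laplace distribution with parameters `(α, θ, σ)`. -/
noncomputable def aLap (α θ σ y : ℝ) : ℝ :=
  α * (1 - α) / σ * Real.exp (-(checkLoss α ((y - θ) / σ)))

/-- Bit-flip probability of outputting `1` on input `v ∈ [c_l, c_u]`. -/
noncomputable def bitp (ε cl cu v : ℝ) : ℝ :=
  1/2 + (v - (cu + cl)/2) / ((cu - cl) * ((Real.exp ε + 1) / (Real.exp ε - 1)))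

/-- Truncation of `y` into `[c_l, c_u]`. -/
noncomputable def trunc (cl cu y : ℝ) : ℝ :=
  if y ≤ cl then cl else if y ≥ cu then cu else y

/-- `Ψ_ε(θ)`: probability that the bit flip of the truncated asymmetric Laplace
variable with location `θ` outputs `1`. -/
noncomputable def Psi (α σ ε cl cu θ : ℝ) : ℝ :=
  ∫ y : ℝ, bitp ε cl cu (trunc cl cu y) * aLap α θ σ y

open Real MeasureTheory Set intervalIntegral Filter

lemma checkLoss_cont (α : ℝ) : Continuous (checkLoss α) := by
  unfold checkLoss
  apply Continuous.if_le
  · exact (continuous_const.sub continuous_const).mul continuous_id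
  · exact continuous_const.mul continuous_id
  · exact continuous_id
  · exact continuous_const
  · intro x hx; simp [hx]

lemma trunc_cont {cl cu : ℝ} (h : cl < cu) : Continuous (trunc cl cu) := by
  unfold trunc
  apply Continuous.if_le
  · exact continuous_const
  · apply Continuous.if_le continuous_const continuous_id continuous_const continuous_id
    intro x hx; exact hx
  · exact continuous_id
  · exact continuous_const
  · intro x hx; subst hx; rw [if_neg (not_le.2 h)]

lemma trunc_eq_self {cl cu y : ℝ} (h1 : cl ≤ y) (h2 : y ≤ cu) : trunc cl cu y = y := by
  unfold trunc
  split_ifs with ha hb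
  · exact (le_antisymm ha h1).symm
  · exact le_antisymm hb h2
  · rfl

lemma bitp_cont (ε cl cu : ℝ) : Continuous (fun v => bitp ε cl cu v) := by
  unfold bitp
  exact continuous_const.add ((continuous_id.sub continuous_const).div_const _)

lemma aLap_cont (α θ σ : ℝ) : Continuous (fun y => aLap α θ σ y) := by
  unfold aLap
  exact continuous_const.mul
    (Real.continuous_exp.comp (((checkLoss_cont α).comp
      ((continuous_id.sub continuous_const).div_const σ)).neg))

lemma int_exp_Iic {b : ℝ} (hb : 0 < b) (c t : ℝ) :
    IntegrableOn (fun y => Real.exp (b*(y-t))) (Iic c) ∧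
      ∫ y in Iic c, Real.exp (b*(y-t)) = Real.exp (b*(c-t))/b := by
  have hint : IntegrableOn (fun y => Real.exp (b*(y-t))) (Iic c) := by
    have h1 : IntegrableOn (fun x : ℝ => Real.exp (-b * x)) (Ioi (-c)) :=
      exp_neg_integrableOn_Ioi _ hb
    have h2 := (MeasurePreserving.integrableOn_comp_preimage
      (Measure.measurePreserving_neg (volume : Measure ℝ))
      (Homeomorph.neg ℝ).measurableEmbedding).2 h1
    have h4 : IntegrableOn (fun y : ℝ => Real.exp (b * y)) (Iio c) := by
      have : ((fun x : ℝ => Real.exp (-b * x)) ∘ (Neg.neg)) = fun y : ℝ => Real.exp (b*y) := by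
        funext y; simp [Function.comp]
      rw [this] at h2
      have hpre : (Neg.neg : ℝ → ℝ) ⁻¹' (Ioi (-c)) = Iio c := by
        ext x; simp
      rwa [hpre] at h2
    have h5 : IntegrableOn (fun y : ℝ => Real.exp (b * y)) (Iic c) := by
      rwa [integrableOn_Iic_iff_integrableOn_Iio]
    have : (fun y : ℝ => Real.exp (b*(y-t))) = fun y => Real.exp (-(b*t)) * Real.exp (b*y) := by
      funext y; rw [← Real.exp_add]; ring_nf
    rw [this]
    exact h5.const_mul _
  refine ⟨hint, ?_⟩
  have hderiv : ∀ x ∈ Iic c, HasDerivAt (fun y => Real.exp (b*(y-t))/b) (Real.exp (b*(x-t))) x := by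
    intro x _
    have h1 : HasDerivAt (fun y : ℝ => b*(y-t)) b x := by
      simpa using ((hasDerivAt_id x).sub_const t).const_mul b
    have := (h1.exp).div_const b
    simpa [mul_div_assoc, mul_comm, hb.ne'] using this
  have htend : Tendsto (fun y => Real.exp (b*(y-t))/b) atBot (nhds 0) := by
    have h0 : Tendsto (fun y : ℝ => y - t) atBot atBot :=
      tendsto_atBot_add_const_right _ (-t) tendsto_id
    have h1 : Tendsto (fun y : ℝ => b*(y-t)) atBot atBot := h0.const_mul_atBot hb
    have h2 : Tendsto (fun y => Real.exp (b*(y-t))) atBot (nhds 0) :=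
      Real.tendsto_exp_atBot.comp h1
    simpa [zero_div] using h2.div_const b
  have := integral_Iic_of_hasDerivAt_of_tendsto' hderiv hint htend
  simpa using this

lemma int_exp_Ioi {a : ℝ} (ha : 0 < a) (c t : ℝ) :
    IntegrableOn (fun y => Real.exp (-a*(y-t))) (Ioi c) ∧
      ∫ y in Ioi c, Real.exp (-a*(y-t)) = Real.exp (-a*(c-t))/a := by
  have hint : IntegrableOn (fun y => Real.exp (-a*(y-t))) (Ioi c) := by
    have h1 : IntegrableOn (fun x : ℝ => Real.exp (-a * x)) (Ioi c) :=
      exp_neg_integrableOn_Ioi _ ha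
    have : (fun y : ℝ => Real.exp (-a*(y-t))) = fun y => Real.exp (a*t) * Real.exp (-a*y) := by
      funext y; rw [← Real.exp_add]; ring_nf
    rw [this]
    exact h1.const_mul _
  refine ⟨hint, ?_⟩
  have hderiv : ∀ x ∈ Ici c,
      HasDerivAt (fun y => -(Real.exp (-a*(y-t))/a)) (Real.exp (-a*(x-t))) x := by
    intro x _
    have h1 : HasDerivAt (fun y : ℝ => -a*(y-t)) (-a) x := by
      simpa using ((hasDerivAt_id x).sub_const t).const_mul (-a)
    have := ((h1.exp).div_const a).neg
    rw [show -(Real.exp (-a*(x-t)) * -a / a) = Real.exp (-a*(x-t)) * (a/a) by ring] at this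
    rw [div_self ha.ne', mul_one] at this
    exact this
  have htend : Tendsto (fun y => -(Real.exp (-a*(y-t))/a)) atTop (nhds 0) := by
    have h0 : Tendsto (fun y : ℝ => y - t) atTop atTop :=
      tendsto_atTop_add_const_right _ (-t) tendsto_id
    have h1 : Tendsto (fun y : ℝ => -a*(y-t)) atTop atBot := by
      have h2 := tendsto_neg_atTop_atBot.comp (h0.const_mul_atTop ha)
      have h3 : (Neg.neg ∘ fun x : ℝ => a * (x - t)) = fun y : ℝ => -a*(y-t) := by
        funext y; simp [Function.comp, neg_mul]
      rwa [h3] at h2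
    have h2 : Tendsto (fun y => Real.exp (-a*(y-t))) atTop (nhds 0) :=
      Real.tendsto_exp_atBot.comp h1
    simpa [zero_div] using (h2.div_const a).neg
  have := integral_Ioi_of_hasDerivAt_of_tendsto' hderiv hint htend
  simpa using this

noncomputable def P1 (α σ ε cl cu θ y : ℝ) : ℝ :=
  (α*(1-α)/σ/((1-α)/σ) * bitp ε cl cu y
    - α*(1-α)/σ/(((cu-cl)*((Real.exp ε+1)/(Real.exp ε-1)))*((1-α)/σ)^2)) *
      Real.exp ((1-α)/σ*(y-θ))

noncomputable def P2 (α σ ε cl cu θ y : ℝ) : ℝ :=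
  (-(α*(1-α)/σ/(α/σ)) * bitp ε cl cu y
    - α*(1-α)/σ/(((cu-cl)*((Real.exp ε+1)/(Real.exp ε-1)))*(α/σ)^2)) *
      Real.exp (-(α/σ)*(y-θ))

lemma one_lt_exp_eps {ε : ℝ} (hε : 0 < ε) : 1 < Real.exp ε := by
  have := Real.exp_lt_exp.2 hε
  simpa using this

lemma hasDerivAt_bitp (ε cl cu x : ℝ) :
    HasDerivAt (fun v => bitp ε cl cu v)
      (1/((cu-cl)*((Real.exp ε+1)/(Real.exp ε-1)))) x := by
  unfold bitp
  simpa using (((hasDerivAt_id x).sub_const ((cu+cl)/2)).div_const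
    ((cu-cl)*((Real.exp ε+1)/(Real.exp ε-1)))).const_add (1/2:ℝ)

lemma hasDerivAt_P1 {α σ ε cl cu : ℝ} (hσ : 0 < σ) (hα0 : 0 < α) (hα1 : α < 1)
    (hε : 0 < ε) (hcl : cl < cu) (θ x : ℝ) :
    HasDerivAt (fun y => P1 α σ ε cl cu θ y)
      (bitp ε cl cu x * (α*(1-α)/σ * Real.exp ((1-α)/σ*(x-θ)))) x := by
  have hσ' := hσ.ne'
  have h1α : (1:ℝ) - α ≠ 0 := by linarith
  have hee : Real.exp ε - 1 ≠ 0 := by have := one_lt_exp_eps hε; linarith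
  have hep : Real.exp ε + 1 ≠ 0 := by have := Real.exp_pos ε; linarith
  have hcc : cu - cl ≠ 0 := by linarith
  have he : HasDerivAt (fun y => Real.exp ((1-α)/σ*(y-θ)))
      (Real.exp ((1-α)/σ*(x-θ)) * ((1-α)/σ)) x := by
    have h1 : HasDerivAt (fun y : ℝ => (1-α)/σ*(y-θ)) ((1-α)/σ) x := by
      simpa using ((hasDerivAt_id x).sub_const θ).const_mul ((1-α)/σ)
    exact h1.exp
  have hb := hasDerivAt_bitp ε cl cu x
  have h2 := ((hb.const_mul (α*(1-α)/σ/((1-α)/σ))).sub_const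
    (α*(1-α)/σ/(((cu-cl)*((Real.exp ε+1)/(Real.exp ε-1)))*((1-α)/σ)^2))).mul he
  unfold P1
  refine h2.congr_deriv ?_
  field_simp
  ring

lemma hasDerivAt_P2 {α σ ε cl cu : ℝ} (hσ : 0 < σ) (hα0 : 0 < α) (hα1 : α < 1)
    (hε : 0 < ε) (hcl : cl < cu) (θ x : ℝ) :
    HasDerivAt (fun y => P2 α σ ε cl cu θ y)
      (bitp ε cl cu x * (α*(1-α)/σ * Real.exp (-(α/σ)*(x-θ)))) x := by
  have hσ' := hσ.ne'
  have h1α : (1:ℝ) - α ≠ 0 := by linarith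
  have hα0' := hα0.ne'
  have hee : Real.exp ε - 1 ≠ 0 := by have := one_lt_exp_eps hε; linarith
  have hep : Real.exp ε + 1 ≠ 0 := by have := Real.exp_pos ε; linarith
  have hcc : cu - cl ≠ 0 := by linarith
  have he : HasDerivAt (fun y => Real.exp (-(α/σ)*(y-θ)))
      (Real.exp (-(α/σ)*(x-θ)) * (-(α/σ))) x := by
    have h1 : HasDerivAt (fun y : ℝ => -(α/σ)*(y-θ)) (-(α/σ)) x := by
      simpa using ((hasDerivAt_id x).sub_const θ).const_mul (-(α/σ))
    exact h1.exp
  have hb := hasDerivAt_bitp ε cl cu x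
  have h2 := ((hb.const_mul (-(α*(1-α)/σ/(α/σ)))).sub_const
    (α*(1-α)/σ/(((cu-cl)*((Real.exp ε+1)/(Real.exp ε-1)))*(α/σ)^2))).mul he
  unfold P2
  refine h2.congr_deriv ?_
  field_simp
  ring

lemma psi_closed_form {α σ ε cl cu θ : ℝ} (hα0 : 0 < α) (hα1 : α < 1) (hσ : 0 < σ)
    (hε : 0 < ε) (hcl : cl < cu) (hθl : cl < θ) (hθu : θ < cu) :
    Psi α σ ε cl cu θ =
      bitp ε cl cu cl * (α * Real.exp ((1-α)/σ*(cl-θ)))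
      + (P1 α σ ε cl cu θ θ - P1 α σ ε cl cu θ cl)
      + (P2 α σ ε cl cu θ cu - P2 α σ ε cl cu θ θ)
      + bitp ε cl cu cu * ((1-α) * Real.exp (-(α/σ)*(cu-θ))) := by
  have hσ' := hσ.ne'
  have h1α : (0:ℝ) < 1 - α := by linarith
  have hbb : 0 < (1-α)/σ := div_pos h1α hσ
  have haa : 0 < α/σ := div_pos hα0 hσ
  set f := fun y => bitp ε cl cu (trunc cl cu y) * aLap α θ σ y with hf
  have hcont : Continuous f :=
    ((bitp_cont ε cl cu).comp (trunc_cont hcl)).mul (aLap_cont α θ σ)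
  have hIic : EqOn f
      (fun y => bitp ε cl cu cl * (α*(1-α)/σ * Real.exp ((1-α)/σ*(y-θ)))) (Iic cl) := by
    intro y hy
    simp only [mem_Iic] at hy
    have ht : trunc cl cu y = cl := by unfold trunc; rw [if_pos hy]
    have hv : (y - θ)/σ ≤ 0 := div_nonpos_of_nonpos_of_nonneg (by linarith) hσ.le
    have harg : -((α-1)*((y-θ)/σ)) = (1-α)/σ*(y-θ) := by ring
    simp only [hf, ht, aLap, checkLoss, if_pos hv, harg]
  have hmid1 : EqOn f
      (fun y => bitp ε cl cu y * (α*(1-α)/σ * Real.exp ((1-α)/σ*(y-θ)))) (Icc cl θ) := by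
    intro y hy
    have ht : trunc cl cu y = y := trunc_eq_self hy.1 (le_trans hy.2 hθu.le)
    have hv : (y - θ)/σ ≤ 0 := div_nonpos_of_nonpos_of_nonneg (by linarith [hy.2]) hσ.le
    have harg : -((α-1)*((y-θ)/σ)) = (1-α)/σ*(y-θ) := by ring
    simp only [hf, ht, aLap, checkLoss, if_pos hv, harg]
  have hmid2 : EqOn f
      (fun y => bitp ε cl cu y * (α*(1-α)/σ * Real.exp (-(α/σ)*(y-θ)))) (Icc θ cu) := by
    intro y hy
    have ht : trunc cl cu y = y := trunc_eq_self (le_trans hθl.le hy.1) hy.2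
    have harg : Real.exp (-(checkLoss α ((y-θ)/σ))) = Real.exp (-(α/σ)*(y-θ)) := by
      rcases eq_or_lt_of_le hy.1 with heq|hlt
      · rw [← heq]; simp [checkLoss]
      · have hv : ¬((y-θ)/σ ≤ 0) := not_le.2 (div_pos (by linarith) hσ)
        rw [show -(α/σ)*(y-θ) = -(α*((y-θ)/σ)) by ring]
        simp only [checkLoss, if_neg hv]
    simp only [hf, ht, aLap, harg]
  have hIoi : EqOn f
      (fun y => bitp ε cl cu cu * (α*(1-α)/σ * Real.exp (-(α/σ)*(y-θ)))) (Ioi cu) := by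
    intro y hy
    simp only [mem_Ioi] at hy
    have ht : trunc cl cu y = cu := by
      unfold trunc
      rw [if_neg (not_le.2 (lt_trans hcl hy)), if_pos (le_of_lt hy)]
    have hv : ¬((y-θ)/σ ≤ 0) := not_le.2 (div_pos (by linarith) hσ)
    have harg : -(α*((y-θ)/σ)) = -(α/σ)*(y-θ) := by ring
    simp only [hf, ht, aLap, checkLoss, if_neg hv, harg]
  -- integrability
  have hint1 : IntegrableOn f (Iic cl) := by
    refine IntegrableOn.congr_fun ?_ hIic.symm measurableSet_Iic
    exact ((int_exp_Iic hbb cl θ).1.const_mul _).const_mul _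
  have hint4 : IntegrableOn f (Ioi cu) := by
    refine IntegrableOn.congr_fun ?_ hIoi.symm measurableSet_Ioi
    exact ((int_exp_Ioi haa cu θ).1.const_mul _).const_mul _
  have hintIoc : IntegrableOn f (Ioc cl cu) := hcont.integrableOn_Ioc
  have hintIoi : IntegrableOn f (Ioi cl) := by
    rw [← Ioc_union_Ioi_eq_Ioi hcl.le]
    exact hintIoc.union hint4
  -- values
  have hI1 : ∫ y in Iic cl, f y
      = bitp ε cl cu cl * (α*(1-α)/σ * (Real.exp ((1-α)/σ*(cl-θ))/((1-α)/σ))) := by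
    rw [setIntegral_congr_fun measurableSet_Iic hIic, MeasureTheory.integral_const_mul,
      MeasureTheory.integral_const_mul, (int_exp_Iic hbb cl θ).2]
  have hI4 : ∫ y in Ioi cu, f y
      = bitp ε cl cu cu * (α*(1-α)/σ * (Real.exp (-(α/σ)*(cu-θ))/(α/σ))) := by
    rw [setIntegral_congr_fun measurableSet_Ioi hIoi, MeasureTheory.integral_const_mul,
      MeasureTheory.integral_const_mul, (int_exp_Ioi haa cu θ).2]
  have hI2 : ∫ y in cl..θ, f y = P1 α σ ε cl cu θ θ - P1 α σ ε cl cu θ cl := by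
    rw [intervalIntegral.integral_congr (by rw [uIcc_of_le hθl.le]; exact hmid1)]
    exact intervalIntegral.integral_eq_sub_of_hasDerivAt
      (f := fun y => P1 α σ ε cl cu θ y)
      (fun x _ => hasDerivAt_P1 hσ hα0 hα1 hε hcl θ x)
      (((bitp_cont ε cl cu).mul (continuous_const.mul
        (Real.continuous_exp.comp
          (continuous_const.mul (continuous_id.sub continuous_const))))).intervalIntegrable _ _)
  have hI3 : ∫ y in θ..cu, f y = P2 α σ ε cl cu θ cu - P2 α σ ε cl cu θ θ := by
    rw [intervalIntegral.integral_congr (by rw [uIcc_of_le hθu.le]; exact hmid2)]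
    exact intervalIntegral.integral_eq_sub_of_hasDerivAt
      (f := fun y => P2 α σ ε cl cu θ y)
      (fun x _ => hasDerivAt_P2 hσ hα0 hα1 hε hcl θ x)
      (((bitp_cont ε cl cu).mul (continuous_const.mul
        (Real.continuous_exp.comp
          (continuous_const.mul (continuous_id.sub continuous_const))))).intervalIntegrable _ _)
  -- assemble
  have hPsi : Psi α σ ε cl cu θ = ∫ y : ℝ, f y := rfl
  have hsplit : ∫ y : ℝ, f y = (∫ y in Iic cl, f y) + ∫ y in Ioi cl, f y :=
    (integral_Iic_add_Ioi hint1 hintIoi).symm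
  have hsplit2 : ∫ y in Ioi cl, f y = (∫ y in Ioc cl cu, f y) + ∫ y in Ioi cu, f y := by
    rw [← setIntegral_union (Set.Ioc_disjoint_Ioi le_rfl) measurableSet_Ioi hintIoc hint4,
      Ioc_union_Ioi_eq_Ioi hcl.le]
  have hioc : ∫ y in Ioc cl cu, f y = ∫ y in cl..cu, f y :=
    (intervalIntegral.integral_of_le hcl.le).symm
  have hadj : (∫ y in cl..θ, f y) + ∫ y in θ..cu, f y = ∫ y in cl..cu, f y :=
    intervalIntegral.integral_add_adjacent_intervals
      (hcont.intervalIntegrable _ _) (hcont.intervalIntegrable _ _)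
  rw [hPsi, hsplit, hsplit2, hioc, ← hadj, hI1, hI2, hI3, hI4]
  field_simp
  ring


/-- For `c_l < θ < c_u`, the derivative of `Ψ_ε` is
`(1/(C_ε(c_u−c_l)))(1 − α e^{((1−α)/σ)(c_l−θ)} − (1−α)e^{−(α/σ)(c_u−θ)})`,
and it lies strictly between `0` and `1/(C_ε(c_u−c_l))`. -/
theorem stmt8 (α σ ε cl cu θ : ℝ) (hα : α ∈ Set.Ioo (0:ℝ) 1) (hσ : 0 < σ)
    (hε : 0 < ε) (hcl : cl < cu) (hθ : θ ∈ Set.Ioo cl cu) :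
    HasDerivAt (Psi α σ ε cl cu)
      (1 / (((Real.exp ε + 1) / (Real.exp ε - 1)) * (cu - cl)) *
        (1 - α * Real.exp (((1 - α) / σ) * (cl - θ))
          - (1 - α) * Real.exp (-(α / σ) * (cu - θ)))) θ ∧
    0 < 1 / (((Real.exp ε + 1) / (Real.exp ε - 1)) * (cu - cl)) *
        (1 - α * Real.exp (((1 - α) / σ) * (cl - θ))
          - (1 - α) * Real.exp (-(α / σ) * (cu - θ))) ∧
    1 / (((Real.exp ε + 1) / (Real.exp ε - 1)) * (cu - cl)) *
        (1 - α * Real.exp (((1 - α) / σ) * (cl - θ))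
          - (1 - α) * Real.exp (-(α / σ) * (cu - θ)))
      < 1 / (((Real.exp ε + 1) / (Real.exp ε - 1)) * (cu - cl)) := by
  obtain ⟨hα0, hα1⟩ := hα
  obtain ⟨hθl, hθu⟩ := hθ
  have hσ' := hσ.ne'
  have h1α : (0:ℝ) < 1 - α := by linarith
  have hee : (1:ℝ) < Real.exp ε := one_lt_exp_eps hε
  have hee' : Real.exp ε - 1 ≠ 0 := by linarith
  have hep : Real.exp ε + 1 ≠ 0 := by have := Real.exp_pos ε; linarith
  have hccp : (0:ℝ) < cu - cl := by linarith
  have hcc : cu - cl ≠ 0 := hccp.ne'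
  have hC : 0 < (Real.exp ε + 1)/(Real.exp ε - 1) :=
    div_pos (by have := Real.exp_pos ε; linarith) (by linarith)
  have hK : 0 < 1 / (((Real.exp ε + 1)/(Real.exp ε - 1)) * (cu - cl)) :=
    one_div_pos.mpr (mul_pos hC hccp)
  have hbb : 0 < (1-α)/σ := div_pos h1α hσ
  have haa : 0 < α/σ := div_pos hα0 hσ
  have he1 : Real.exp ((1-α)/σ*(cl-θ)) < 1 := by
    have h := Real.exp_lt_exp.2 (mul_neg_of_pos_of_neg hbb (by linarith : cl - θ < 0))
    simpa using h
  have he2 : Real.exp (-(α/σ)*(cu-θ)) < 1 := by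
    have harg : -(α/σ)*(cu-θ) < 0 := by nlinarith [mul_pos haa (sub_pos.2 hθu)]
    have h := Real.exp_lt_exp.2 harg
    simpa using h
  have he1p := Real.exp_pos ((1-α)/σ*(cl-θ))
  have he2p := Real.exp_pos (-(α/σ)*(cu-θ))
  have hXpos : 0 < 1 - α * Real.exp ((1-α)/σ*(cl-θ)) - (1-α) * Real.exp (-(α/σ)*(cu-θ)) := by
    nlinarith
  have hXlt : 1 - α * Real.exp ((1-α)/σ*(cl-θ)) - (1-α) * Real.exp (-(α/σ)*(cu-θ)) < 1 := by
    nlinarith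
  refine ⟨?_, mul_pos hK hXpos, mul_lt_of_lt_one_right hK hXlt⟩
  -- derivative
  have heb : HasDerivAt (fun x : ℝ => Real.exp ((1-α)/σ*(cl-x)))
      (Real.exp ((1-α)/σ*(cl-θ)) * ((1-α)/σ * (-1))) θ :=
    (((hasDerivAt_id θ).const_sub cl).const_mul ((1-α)/σ)).exp
  have hea : HasDerivAt (fun x : ℝ => Real.exp (-(α/σ)*(cu-x)))
      (Real.exp (-(α/σ)*(cu-θ)) * (-(α/σ) * (-1))) θ :=
    (((hasDerivAt_id θ).const_sub cu).const_mul (-(α/σ))).exp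
  have hbit := hasDerivAt_bitp ε cl cu θ
  have T1 := (heb.const_mul α).const_mul (bitp ε cl cu cl)
  have T2 := ((hbit.const_mul (α*(1-α)/σ/((1-α)/σ))).sub_const
      (α*(1-α)/σ/(((cu-cl)*((Real.exp ε+1)/(Real.exp ε-1)))*((1-α)/σ)^2))).sub
    (heb.const_mul (α*(1-α)/σ/((1-α)/σ) * bitp ε cl cu cl
      - α*(1-α)/σ/(((cu-cl)*((Real.exp ε+1)/(Real.exp ε-1)))*((1-α)/σ)^2)))
  have T3 := (hea.const_mul (-(α*(1-α)/σ/(α/σ)) * bitp ε cl cu cu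
      - α*(1-α)/σ/(((cu-cl)*((Real.exp ε+1)/(Real.exp ε-1)))*(α/σ)^2))).sub
    ((hbit.const_mul (-(α*(1-α)/σ/(α/σ)))).sub_const
      (α*(1-α)/σ/(((cu-cl)*((Real.exp ε+1)/(Real.exp ε-1)))*(α/σ)^2)))
  have T4 := (hea.const_mul (1-α)).const_mul (bitp ε cl cu cu)
  have hD := ((T1.add T2).add T3).add T4
  have hDval : HasDerivAt (fun x : ℝ =>
      bitp ε cl cu cl * (α * Real.exp ((1-α)/σ*(cl-x)))
      + ((α*(1-α)/σ/((1-α)/σ) * bitp ε cl cu x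
          - α*(1-α)/σ/(((cu-cl)*((Real.exp ε+1)/(Real.exp ε-1)))*((1-α)/σ)^2))
        - (α*(1-α)/σ/((1-α)/σ) * bitp ε cl cu cl
          - α*(1-α)/σ/(((cu-cl)*((Real.exp ε+1)/(Real.exp ε-1)))*((1-α)/σ)^2))
            * Real.exp ((1-α)/σ*(cl-x)))
      + ((-(α*(1-α)/σ/(α/σ)) * bitp ε cl cu cu
          - α*(1-α)/σ/(((cu-cl)*((Real.exp ε+1)/(Real.exp ε-1)))*(α/σ)^2))
            * Real.exp (-(α/σ)*(cu-x))
        - (-(α*(1-α)/σ/(α/σ)) * bitp ε cl cu x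
          - α*(1-α)/σ/(((cu-cl)*((Real.exp ε+1)/(Real.exp ε-1)))*(α/σ)^2)))
      + bitp ε cl cu cu * ((1-α) * Real.exp (-(α/σ)*(cu-x))))
      (1 / (((Real.exp ε + 1) / (Real.exp ε - 1)) * (cu - cl)) *
        (1 - α * Real.exp (((1 - α) / σ) * (cl - θ))
          - (1 - α) * Real.exp (-(α / σ) * (cu - θ)))) θ := by
    refine hD.congr_deriv ?_
    field_simp
    ring
  refine hDval.congr_of_eventuallyEq ?_
  filter_upwards [Ioo_mem_nhds hθl hθu] with x hx
  rw [psi_closed_form hα0 hα1 hσ hε hcl hx.1 hx.2]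
  simp only [P1, P2, sub_self, mul_zero, Real.exp_zero, mul_one]
end

section
/- For θ ≤ c_l, Ψ_ε(θ) = 1/2 − 1/(2C_ε) + ((1−α)σ/α)·(1/(C_ε(c_u−c_l)))·(exp(−(α/σ)(c_l−θ)) − exp(−(α/σ)(c_u−θ))), and its derivative Ψ'_ε(θ) = ((1−α)/(C_ε(c_u−c_l)))·(exp(−(α/σ)(c_l−θ)) − exp(−(α/σ)(c_u−θ))) is strictly positive and strictly less than (1−α)/(C_ε(c_u−c_l)). -/
open MeasureTheory Real Set Filter

lemma expNeg_intOn_Ioi {r : ℝ} (hr : 0 < r) (a : ℝ) :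
    IntegrableOn (fun z : ℝ => Real.exp (-(r * z))) (Ioi a) := by
  simpa [neg_mul] using exp_neg_integrableOn_Ioi a hr

lemma tendsto_expNeg_atTop {r : ℝ} (hr : 0 < r) :
    Tendsto (fun z : ℝ => Real.exp (-(r * z))) atTop (nhds 0) := by
  have h1 : Tendsto (fun z : ℝ => r * z) atTop atTop :=
    Tendsto.const_mul_atTop hr tendsto_id
  exact Real.tendsto_exp_atBot.comp (tendsto_neg_atTop_atBot.comp h1)

lemma hasDerivAt_expNeg {r : ℝ} (hr : r ≠ 0) (x : ℝ) :
    HasDerivAt (fun z : ℝ => -Real.exp (-(r * z)) / r) (Real.exp (-(r * x))) x := by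
  have h1 : HasDerivAt (fun z : ℝ => -(r * z)) (-r) x := by
    simpa using ((hasDerivAt_id x).const_mul r).fun_neg
  have h2 := (h1.exp).neg.div_const r
  refine h2.congr_deriv ?_
  field_simp

lemma integral_expNeg_Ioi {r : ℝ} (hr : 0 < r) (a : ℝ) :
    ∫ z in Ioi a, Real.exp (-(r * z)) = Real.exp (-(r * a)) / r := by
  have ht : Tendsto (fun z : ℝ => -Real.exp (-(r * z)) / r) atTop (nhds 0) := by
    have := ((tendsto_expNeg_atTop hr).neg).div_const r
    simpa using this
  have := integral_Ioi_of_hasDerivAt_of_tendsto'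
    (fun x _ => hasDerivAt_expNeg hr.ne' x) (expNeg_intOn_Ioi hr a) ht
  rw [this]; ring

lemma exp_intOn_Iic {r : ℝ} (hr : 0 < r) (a : ℝ) :
    IntegrableOn (fun z : ℝ => Real.exp (r * z)) (Iic a) := by
  have h : Integrable ((Ioi (-a)).indicator (fun z : ℝ => Real.exp (-(r * z)))) :=
    (integrable_indicator_iff measurableSet_Ioi).mpr (expNeg_intOn_Ioi hr (-a))
  have h2 := h.comp_neg
  have heq : (fun x : ℝ => (Ioi (-a)).indicator (fun z : ℝ => Real.exp (-(r * z))) (-x))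
      = (Iio a).indicator (fun z : ℝ => Real.exp (r * z)) := by
    funext x
    by_cases hx : x < a
    · rw [Set.indicator_of_mem (show -x ∈ Ioi (-a) by simpa using hx),
        Set.indicator_of_mem (show x ∈ Iio a from hx)]
      congr 1; ring
    · rw [Set.indicator_of_notMem (show -x ∉ Ioi (-a) by simpa using hx),
        Set.indicator_of_notMem (show x ∉ Iio a from hx)]
  rw [heq] at h2
  have := (integrable_indicator_iff measurableSet_Iio).mp h2
  exact (integrableOn_Iic_iff_integrableOn_Iio).mpr this

lemma integral_expPos_Iic {r : ℝ} (hr : 0 < r) (a : ℝ) :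
    ∫ z in Iic a, Real.exp (r * z) = Real.exp (r * a) / r := by
  have hd : ∀ x ∈ Iic a, HasDerivAt (fun z : ℝ => Real.exp (r * z) / r)
      (Real.exp (r * x)) x := by
    intro x _
    have h1 : HasDerivAt (fun z : ℝ => r * z) r x := by
      simpa using (hasDerivAt_id x).const_mul r
    have h2 := (h1.exp).div_const r
    refine h2.congr_deriv ?_
    field_simp
  have ht : Tendsto (fun z : ℝ => Real.exp (r * z) / r) atBot (nhds 0) := by
    have h1 : Tendsto (fun z : ℝ => r * z) atBot atBot :=
      Tendsto.const_mul_atBot hr tendsto_id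
    have := (Real.tendsto_exp_atBot.comp h1).div_const r
    simpa using this
  have := integral_Iic_of_hasDerivAt_of_tendsto' hd (exp_intOn_Iic hr a) ht
  rw [this]; ring

lemma integral_expNeg_Ioc {r : ℝ} (hr : 0 < r) {a b : ℝ} (hab : a ≤ b) :
    ∫ z in Ioc a b, Real.exp (-(r * z))
      = Real.exp (-(r * a)) / r - Real.exp (-(r * b)) / r := by
  rw [← intervalIntegral.integral_of_le hab]
  have := intervalIntegral.integral_eq_sub_of_hasDerivAt
    (f := fun z : ℝ => -Real.exp (-(r * z)) / r)
    (fun x _ => hasDerivAt_expNeg hr.ne' x)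
    (Continuous.intervalIntegrable (by fun_prop) a b)
  rw [this]; ring

lemma integral_linexp_Ioc {r P Q : ℝ} (hr : 0 < r) {a b : ℝ} (hab : a ≤ b) :
    ∫ z in Ioc a b, (P + Q * z) * Real.exp (-(r * z))
      = (P + Q * a + Q / r) * Real.exp (-(r * a)) / r
        - (P + Q * b + Q / r) * Real.exp (-(r * b)) / r := by
  rw [← intervalIntegral.integral_of_le hab]
  have hd : ∀ x ∈ Set.uIcc a b, HasDerivAt
      (fun z : ℝ => -((P + Q * z + Q / r) * Real.exp (-(r * z)) / r))
      ((P + Q * x) * Real.exp (-(r * x))) x := by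
    intro x _
    have h1 : HasDerivAt (fun z : ℝ => -(r * z)) (-r) x := by
      simpa using ((hasDerivAt_id x).const_mul r).fun_neg
    have h2 : HasDerivAt (fun z : ℝ => P + Q * z + Q / r) Q x := by
      simpa using (((hasDerivAt_id x).const_mul Q).const_add P).add_const (Q / r)
    have h3 := ((h2.mul h1.exp).div_const r).neg
    refine h3.congr_deriv ?_
    field_simp
    ring
  have := intervalIntegral.integral_eq_sub_of_hasDerivAt hd
    (Continuous.intervalIntegrable (by fun_prop) a b)
  rw [this]; ring

lemma checkLoss_eq_max {α : ℝ} (hα0 : 0 < α) (hα1 : α < 1) (τ : ℝ) :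
    checkLoss α τ = max ((α - 1) * τ) (α * τ) := by
  unfold checkLoss
  split_ifs with h
  · exact (max_eq_left (by nlinarith)).symm
  · push_neg at h
    exact (max_eq_right (by nlinarith)).symm

lemma aLap0_continuous {α σ : ℝ} (hα0 : 0 < α) (hα1 : α < 1) :
    Continuous (aLap α 0 σ) := by
  have : aLap α 0 σ = fun z =>
      α * (1 - α) / σ * Real.exp (-(max ((α - 1) * ((z - 0) / σ)) (α * ((z - 0) / σ)))) := by
    funext z; rw [aLap, checkLoss_eq_max hα0 hα1]
  rw [this]; fun_prop

lemma aLap0_of_nonpos {α σ : ℝ} (hσ : 0 < σ) {z : ℝ} (hz : z ≤ 0) :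
    aLap α 0 σ z = α * (1 - α) / σ * Real.exp ((1 - α) / σ * z) := by
  have h : (z - 0) / σ ≤ 0 := div_nonpos_iff.mpr (Or.inr ⟨by linarith, hσ.le⟩)
  rw [aLap, checkLoss, if_pos h]
  congr 1
  field_simp
  ring

lemma aLap0_of_pos {α σ : ℝ} (hσ : 0 < σ) {z : ℝ} (hz : 0 < z) :
    aLap α 0 σ z = α * (1 - α) / σ * Real.exp (-(α / σ * z)) := by
  have h : ¬((z - 0) / σ ≤ 0) := not_le.mpr (div_pos (by linarith) hσ)
  rw [aLap, checkLoss, if_neg h]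
  congr 1
  field_simp
  simp

lemma aLap0_integrable {α σ : ℝ} (hα0 : 0 < α) (hα1 : α < 1) (hσ : 0 < σ) :
    Integrable (aLap α 0 σ) := by
  have hs : 0 < (1 - α) / σ := div_pos (by linarith) hσ
  have hr : 0 < α / σ := div_pos hα0 hσ
  have h1 : IntegrableOn (aLap α 0 σ) (Iic 0) :=
    IntegrableOn.congr_fun ((exp_intOn_Iic hs 0).const_mul (α * (1 - α) / σ))
      (fun z hz => (aLap0_of_nonpos hσ hz).symm) measurableSet_Iic
  have h2 : IntegrableOn (aLap α 0 σ) (Ioi 0) :=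
    IntegrableOn.congr_fun ((expNeg_intOn_Ioi hr 0).const_mul (α * (1 - α) / σ))
      (fun z hz => (aLap0_of_pos hσ hz).symm) measurableSet_Ioi
  rw [← integrableOn_univ, ← Iic_union_Ioi (a := (0 : ℝ))]
  exact h1.union h2

lemma trunc_lo {cl cu y : ℝ} (h : y ≤ cl) : trunc cl cu y = cl := by
  rw [trunc, if_pos h]

lemma trunc_hi {cl cu y : ℝ} (hcl : cl < cu) (h : cu ≤ y) : trunc cl cu y = cu := by
  rw [trunc, if_neg (by push_neg; linarith), if_pos h]

lemma trunc_mid {cl cu y : ℝ} (h1 : cl < y) (h2 : y ≤ cu) : trunc cl cu y = y := by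
  rw [trunc, if_neg (not_le.mpr h1)]
  split_ifs with h
  · linarith [le_antisymm h2 h]
  · rfl

lemma trunc_eq_clamp {cl cu : ℝ} (h : cl ≤ cu) (y : ℝ) :
    trunc cl cu y = max cl (min cu y) := by
  unfold trunc
  split_ifs with h1 h2
  · rw [min_eq_right (h1.trans h), max_eq_left h1]
  · rw [min_eq_left h2, max_eq_right h]
  · rw [min_eq_right (not_le.mp h2).le, max_eq_right (not_le.mp h1).le]

lemma trunc_lip {cl cu : ℝ} (h : cl ≤ cu) (v w : ℝ) :
    |trunc cl cu v - trunc cl cu w| ≤ |v - w| := by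
  rw [trunc_eq_clamp h, trunc_eq_clamp h]
  calc |max cl (min cu v) - max cl (min cu w)|
      = |max (min cu v) cl - max (min cu w) cl| := by rw [max_comm cl, max_comm cl]
    _ ≤ |min cu v - min cu w| := abs_max_sub_max_le_abs _ _ _
    _ ≤ |v - w| := by
        refine (abs_min_sub_min_le_max cu v cu w).trans ?_
        simp

lemma trunc_mem {cl cu : ℝ} (h : cl ≤ cu) (v : ℝ) :
    cl ≤ trunc cl cu v ∧ trunc cl cu v ≤ cu := by
  unfold trunc
  split_ifs with h1 h2
  exacts [⟨le_rfl, h⟩, ⟨h, le_rfl⟩, ⟨(not_le.mp h1).le, (not_le.mp h2).le⟩]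

set_option maxHeartbeats 2000000 in
/-- For `θ ≤ c_l`: the closed form of `Ψ_ε(θ)`, and its derivative
`((1−α)/(C_ε(c_u−c_l)))(e^{−(α/σ)(c_l−θ)} − e^{−(α/σ)(c_u−θ)})` is strictly positive
and strictly less than `(1−α)/(C_ε(c_u−c_l))`. -/
theorem stmt10 (α σ ε cl cu θ : ℝ) (hα : α ∈ Set.Ioo (0:ℝ) 1) (hσ : 0 < σ)
    (hε : 0 < ε) (hcl : cl < cu) (hθ : θ ≤ cl) :
    Psi α σ ε cl cu θ =
      1/2 - 1 / (2 * ((Real.exp ε + 1) / (Real.exp ε - 1)))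
      + ((1 - α) * σ / α) * (1 / (((Real.exp ε + 1) / (Real.exp ε - 1)) * (cu - cl))) *
        (Real.exp (-(α / σ) * (cl - θ)) - Real.exp (-(α / σ) * (cu - θ))) ∧
    HasDerivAt (Psi α σ ε cl cu)
      ((1 - α) / (((Real.exp ε + 1) / (Real.exp ε - 1)) * (cu - cl)) *
        (Real.exp (-(α / σ) * (cl - θ)) - Real.exp (-(α / σ) * (cu - θ)))) θ ∧
    0 < (1 - α) / (((Real.exp ε + 1) / (Real.exp ε - 1)) * (cu - cl)) *
        (Real.exp (-(α / σ) * (cl - θ)) - Real.exp (-(α / σ) * (cu - θ))) ∧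
    (1 - α) / (((Real.exp ε + 1) / (Real.exp ε - 1)) * (cu - cl)) *
        (Real.exp (-(α / σ) * (cl - θ)) - Real.exp (-(α / σ) * (cu - θ)))
      < (1 - α) / (((Real.exp ε + 1) / (Real.exp ε - 1)) * (cu - cl)) := by
  obtain ⟨hα0, hα1⟩ := hα
  have hα1' : (0:ℝ) < 1 - α := by linarith
  have hE : (1:ℝ) < Real.exp ε := by
    have := Real.exp_lt_exp.mpr hε
    simpa using this
  have hE1 : (0:ℝ) < Real.exp ε - 1 := by linarith
  have hC0 : 0 < (Real.exp ε + 1) / (Real.exp ε - 1) :=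
    div_pos (by linarith) hE1
  have hC1 : 1 < (Real.exp ε + 1) / (Real.exp ε - 1) := by
    rw [lt_div_iff₀ hE1]; linarith
  have hk : 0 < (cu - cl) * ((Real.exp ε + 1) / (Real.exp ε - 1)) :=
    mul_pos (by linarith) hC0
  have hr : 0 < α / σ := div_pos hα0 hσ
  have ha0 : (0:ℝ) ≤ cl - θ := by linarith
  have hab : cl - θ < cu - θ := by linarith
  -- normalize the exponents in the goal
  rw [show -(α/σ) * (cl - θ) = -(α/σ * (cl - θ)) by ring,
      show -(α/σ) * (cu - θ) = -(α/σ * (cu - θ)) by ring]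
  have he1_le : Real.exp (-(α/σ * (cl - θ))) ≤ 1 := by
    rw [Real.exp_le_one_iff]
    have : 0 ≤ α/σ * (cl - θ) := mul_nonneg hr.le ha0
    linarith
  have he12 : Real.exp (-(α/σ * (cu - θ))) < Real.exp (-(α/σ * (cl - θ))) := by
    apply Real.exp_lt_exp.mpr
    have h1 : α/σ * (cl - θ) < α/σ * (cu - θ) := by
      apply mul_lt_mul_of_pos_left hab hr
    linarith
  have he2_pos : 0 < Real.exp (-(α/σ * (cu - θ))) := Real.exp_pos _
  -- basic objects
  have f0_int : Integrable (aLap α 0 σ) := aLap0_integrable hα0 hα1 hσ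
  have f0_cont : Continuous (aLap α 0 σ) := aLap0_continuous hα0 hα1
  have g_cont : Continuous (fun v => bitp ε cl cu (trunc cl cu v)) := by
    have : (fun v => bitp ε cl cu (trunc cl cu v))
        = fun v => 1/2 + (max cl (min cu v) - (cu + cl)/2) /
            ((cu - cl) * ((Real.exp ε + 1) / (Real.exp ε - 1))) := by
      funext v; rw [trunc_eq_clamp hcl.le, bitp]
    rw [this]; fun_prop
  have g_bound : ∀ v, ‖bitp ε cl cu (trunc cl cu v)‖ ≤ 1 := by
    intro v
    obtain ⟨h1, h2⟩ := trunc_mem hcl.le v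
    rw [Real.norm_eq_abs, bitp, abs_le]
    have hb : |trunc cl cu v - (cu + cl)/2| ≤ (cu - cl)/2 := by
      rw [abs_le]; constructor <;> linarith
    have hx : |(trunc cl cu v - (cu + cl)/2) /
        ((cu - cl) * ((Real.exp ε + 1) / (Real.exp ε - 1)))| ≤ 1/2 := by
      rw [abs_div, abs_of_pos hk, div_le_iff₀ hk]
      nlinarith [abs_nonneg (trunc cl cu v - (cu + cl)/2)]
    have := abs_le.mp hx
    constructor <;> linarith
  have g_lip : ∀ v w, |bitp ε cl cu (trunc cl cu v) - bitp ε cl cu (trunc cl cu w)|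
      ≤ |v - w| / ((cu - cl) * ((Real.exp ε + 1) / (Real.exp ε - 1))) := by
    intro v w
    have h1 : bitp ε cl cu (trunc cl cu v) - bitp ε cl cu (trunc cl cu w)
        = (trunc cl cu v - trunc cl cu w) /
            ((cu - cl) * ((Real.exp ε + 1) / (Real.exp ε - 1))) := by
      rw [bitp, bitp]; ring
    rw [h1, abs_div, abs_of_pos hk, div_eq_mul_inv, div_eq_mul_inv]
    exact mul_le_mul_of_nonneg_right (trunc_lip hcl.le v w) (inv_nonneg.mpr hk.le)
  -- representation of Psi
  have psi_repr : ∀ t : ℝ, Psi α σ ε cl cu t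
      = ∫ z : ℝ, bitp ε cl cu (trunc cl cu (z + t)) * aLap α 0 σ z := by
    intro t
    have h1 : ∀ y : ℝ, aLap α t σ y = aLap α 0 σ (y - t) := by
      intro y; simp only [aLap, sub_zero]
    have h2 := integral_add_right_eq_self (μ := volume)
      (fun y : ℝ => bitp ε cl cu (trunc cl cu y) * aLap α 0 σ (y - t)) t
    rw [Psi]
    simp only [h1]
    rw [← h2]
    congr 1; funext z; rw [add_sub_cancel_right]
  -- integrability of the integrand
  have F_int : ∀ t : ℝ, Integrable
      (fun z => bitp ε cl cu (trunc cl cu (z + t)) * aLap α 0 σ z) := by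
    intro t
    exact f0_int.bdd_mul
      ((g_cont.comp (continuous_id.add continuous_const)).aestronglyMeasurable)
      (Eventually.of_forall fun z => g_bound _)
  -- the derivative via differentiation under the integral sign
  have hderiv_key := hasDerivAt_integral_of_dominated_loc_of_lip
    (F := fun t z => bitp ε cl cu (trunc cl cu (z + t)) * aLap α 0 σ z)
    (F' := (Ioo (cl - θ) (cu - θ)).indicator
      (fun z => aLap α 0 σ z / ((cu - cl) * ((Real.exp ε + 1) / (Real.exp ε - 1)))))
    (x₀ := θ)
    (bound := fun z => aLap α 0 σ z / ((cu - cl) * ((Real.exp ε + 1) / (Real.exp ε - 1))))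
    (Metric.ball_mem_nhds θ one_pos)
    (Eventually.of_forall fun t => (F_int t).aestronglyMeasurable)
    (F_int θ)
    (((f0_cont.div_const _).aestronglyMeasurable).indicator measurableSet_Ioo)
    (by
      refine Eventually.of_forall fun z => ?_
      rw [lipschitzOnWith_iff_dist_le_mul]
      intro t1 _ t2 _
      rw [Real.dist_eq, Real.dist_eq]
      have h3 : bitp ε cl cu (trunc cl cu (z + t1)) * aLap α 0 σ z
          - bitp ε cl cu (trunc cl cu (z + t2)) * aLap α 0 σ z
          = (bitp ε cl cu (trunc cl cu (z + t1)) - bitp ε cl cu (trunc cl cu (z + t2)))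
            * aLap α 0 σ z := by ring
      rw [h3, abs_mul]
      have h1 := g_lip (z + t1) (z + t2)
      have h2 : (z + t1) - (z + t2) = t1 - t2 := by ring
      rw [h2] at h1
      have hcoe : ((Real.nnabs (aLap α 0 σ z /
          ((cu - cl) * ((Real.exp ε + 1) / (Real.exp ε - 1))))) : ℝ)
          = |aLap α 0 σ z| / ((cu - cl) * ((Real.exp ε + 1) / (Real.exp ε - 1))) := by
        rw [Real.coe_nnabs, abs_div, abs_of_pos hk]
      rw [hcoe]
      calc |bitp ε cl cu (trunc cl cu (z + t1)) - bitp ε cl cu (trunc cl cu (z + t2))|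
            * |aLap α 0 σ z|
          ≤ (|t1 - t2| / ((cu - cl) * ((Real.exp ε + 1) / (Real.exp ε - 1))))
            * |aLap α 0 σ z| := mul_le_mul_of_nonneg_right h1 (abs_nonneg _)
        _ = |aLap α 0 σ z| / ((cu - cl) * ((Real.exp ε + 1) / (Real.exp ε - 1)))
            * |t1 - t2| := by ring)
    (f0_int.div_const _)
    (by
      have hnull : (volume : Measure ℝ) ({cl - θ} ∪ {cu - θ}) = 0 :=
        measure_union_null Real.volume_singleton Real.volume_singleton
      refine eventually_of_mem (show ({cl - θ} ∪ {cu - θ})ᶜ ∈ ae volume by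
        rw [mem_ae_iff, compl_compl]; exact hnull) ?_
      intro z hz
      simp only [mem_compl_iff, mem_union, mem_singleton_iff, not_or] at hz
      obtain ⟨hza, hzb⟩ := hz
      have hza' : z + θ ≠ cl := fun h => hza (by linarith)
      have hzb' : z + θ ≠ cu := fun h => hzb (by linarith)
      rcases lt_trichotomy (z + θ) cl with hlt | heq | hgt
      · -- left region: constant
        have hev : (fun t => bitp ε cl cu (trunc cl cu (z + t)) * aLap α 0 σ z)
            =ᶠ[nhds θ] fun _ => bitp ε cl cu cl * aLap α 0 σ z := by
          have h1 : Iio cl ∈ nhds (z + θ) := Iio_mem_nhds hlt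
          have h2 := (Continuous.continuousAt
            (by fun_prop : Continuous fun t : ℝ => z + t) (x := θ)).preimage_mem_nhds h1
          filter_upwards [h2] with t ht
          simp only [mem_preimage, mem_Iio] at ht
          rw [trunc_lo ht.le]
        have h0 := ((hasDerivAt_const θ (bitp ε cl cu cl * aLap α 0 σ z)).congr_of_eventuallyEq
          hev)
        have hnm : z ∉ Ioo (cl - θ) (cu - θ) := by
          simp only [mem_Ioo, not_and_or, not_lt]
          left; linarith
        rw [Set.indicator_of_notMem hnm]
        exact h0
      · exact absurd heq hza'
      · rcases lt_trichotomy (z + θ) cu with hlt2 | heq2 | hgt2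
        · -- middle region
          have hev : (fun t => bitp ε cl cu (trunc cl cu (z + t)) * aLap α 0 σ z)
              =ᶠ[nhds θ] fun t => (1/2 + (z + t - (cu + cl)/2) /
                ((cu - cl) * ((Real.exp ε + 1) / (Real.exp ε - 1)))) * aLap α 0 σ z := by
            have h1 : Ioo cl cu ∈ nhds (z + θ) := Ioo_mem_nhds hgt hlt2
            have h2 := (Continuous.continuousAt
              (by fun_prop : Continuous fun t : ℝ => z + t) (x := θ)).preimage_mem_nhds h1
            filter_upwards [h2] with t ht
            simp only [mem_preimage, mem_Ioo] at ht
            rw [trunc_mid ht.1 ht.2.le, bitp]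
          have hd : HasDerivAt (fun t => (1/2 + (z + t - (cu + cl)/2) /
              ((cu - cl) * ((Real.exp ε + 1) / (Real.exp ε - 1)))) * aLap α 0 σ z)
              ((1 / ((cu - cl) * ((Real.exp ε + 1) / (Real.exp ε - 1)))) * aLap α 0 σ z) θ := by
            have h0 : HasDerivAt (fun t : ℝ => z + t) 1 θ := by
              simpa using (hasDerivAt_id θ).const_add z
            have h0' := (((h0.sub_const ((cu + cl)/2)).div_const
              ((cu - cl) * ((Real.exp ε + 1) / (Real.exp ε - 1)))).const_add
              (1/2 : ℝ)).mul_const (aLap α 0 σ z)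
            convert h0' using 1
            try ring
          have hmem : z ∈ Ioo (cl - θ) (cu - θ) := ⟨by linarith, by linarith⟩
          rw [Set.indicator_of_mem hmem]
          have := hd.congr_of_eventuallyEq hev
          convert this using 1
          ring
        · exact absurd heq2 hzb'
        · -- right region: constant
          have hev : (fun t => bitp ε cl cu (trunc cl cu (z + t)) * aLap α 0 σ z)
              =ᶠ[nhds θ] fun _ => bitp ε cl cu cu * aLap α 0 σ z := by
            have h1 : Ioi cu ∈ nhds (z + θ) := Ioi_mem_nhds hgt2
            have h2 := (Continuous.continuousAt
              (by fun_prop : Continuous fun t : ℝ => z + t) (x := θ)).preimage_mem_nhds h1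
            filter_upwards [h2] with t ht
            simp only [mem_preimage, mem_Ioi] at ht
            rw [trunc_hi hcl ht.le]
          have h0 := ((hasDerivAt_const θ (bitp ε cl cu cu * aLap α 0 σ z)).congr_of_eventuallyEq
            hev)
          have hnm : z ∉ Ioo (cl - θ) (cu - θ) := by
            simp only [mem_Ioo, not_and_or, not_lt]
            right; linarith
          rw [Set.indicator_of_notMem hnm]
          exact h0)
  obtain ⟨-, hD⟩ := hderiv_key
  have hPsiD : HasDerivAt (Psi α σ ε cl cu)
      (∫ z, ((Ioo (cl - θ) (cu - θ)).indicator
        (fun z => aLap α 0 σ z / ((cu - cl) * ((Real.exp ε + 1) / (Real.exp ε - 1)))) z)) θ := by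
    have heq : Psi α σ ε cl cu
        = fun t => ∫ z : ℝ, bitp ε cl cu (trunc cl cu (z + t)) * aLap α 0 σ z :=
      funext psi_repr
    rw [heq]
    exact hD
  -- value of the derivative integral
  have hIoo_val : (∫ z, ((Ioo (cl - θ) (cu - θ)).indicator
      (fun z => aLap α 0 σ z / ((cu - cl) * ((Real.exp ε + 1) / (Real.exp ε - 1)))) z))
      = (α * (1 - α) / σ) / ((cu - cl) * ((Real.exp ε + 1) / (Real.exp ε - 1)))
        * (Real.exp (-(α/σ * (cl - θ))) / (α/σ) - Real.exp (-(α/σ * (cu - θ))) / (α/σ)) := by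
    rw [integral_indicator measurableSet_Ioo, ← integral_Ioc_eq_integral_Ioo]
    rw [setIntegral_congr_fun measurableSet_Ioc
      (g := fun z => (α * (1 - α) / σ) / ((cu - cl) * ((Real.exp ε + 1) / (Real.exp ε - 1)))
        * Real.exp (-(α/σ * z)))
      (fun z hz => by
        rw [aLap0_of_pos hσ (lt_of_le_of_lt ha0 hz.1)]
        ring)]
    rw [integral_const_mul, integral_expNeg_Ioc hr hab.le]
    try ring
  -- piece values for Psi itself
  have hIic0 : ∫ z in Iic (0:ℝ), aLap α 0 σ z = α := by
    have hs : 0 < (1 - α) / σ := div_pos hα1' hσ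
    rw [setIntegral_congr_fun measurableSet_Iic
      (g := fun z => α * (1 - α) / σ * Real.exp ((1 - α)/σ * z))
      (fun z hz => aLap0_of_nonpos hσ hz)]
    rw [integral_const_mul, integral_expPos_Iic hs, mul_zero, Real.exp_zero]
    field_simp
  have hIoc0a : ∫ z in Ioc (0:ℝ) (cl - θ), aLap α 0 σ z
      = (1 - α) * (1 - Real.exp (-(α/σ * (cl - θ)))) := by
    rw [setIntegral_congr_fun measurableSet_Ioc
      (g := fun z => α * (1 - α) / σ * Real.exp (-(α/σ * z)))
      (fun z hz => aLap0_of_pos hσ hz.1)]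
    rw [integral_const_mul, integral_expNeg_Ioc hr ha0, mul_zero, neg_zero, Real.exp_zero]
    field_simp
  have hIic_a : ∫ z in Iic (cl - θ), aLap α 0 σ z
      = α + (1 - α) * (1 - Real.exp (-(α/σ * (cl - θ)))) := by
    rw [show Iic (cl - θ) = Iic 0 ∪ Ioc 0 (cl - θ) from (Iic_union_Ioc_eq_Iic ha0).symm,
      setIntegral_union (Iic_disjoint_Ioc le_rfl) measurableSet_Ioc
        f0_int.integrableOn f0_int.integrableOn, hIic0, hIoc0a]
  have hI1 : ∫ z in Iic (cl - θ), bitp ε cl cu (trunc cl cu (z + θ)) * aLap α 0 σ z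
      = bitp ε cl cu cl * (α + (1 - α) * (1 - Real.exp (-(α/σ * (cl - θ))))) := by
    rw [setIntegral_congr_fun measurableSet_Iic
      (g := fun z => bitp ε cl cu cl * aLap α 0 σ z)
      (fun z hz => by rw [trunc_lo (show z + θ ≤ cl by
        simp only [mem_Iic] at hz; linarith)]),
      integral_const_mul, hIic_a]
  have hI2 : ∫ z in Ioc (cl - θ) (cu - θ), bitp ε cl cu (trunc cl cu (z + θ)) * aLap α 0 σ z
      = (α * (1 - α) / σ) *
        (((1/2 + (θ - (cu + cl)/2) / ((cu - cl) * ((Real.exp ε + 1) / (Real.exp ε - 1))))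
            + (1 / ((cu - cl) * ((Real.exp ε + 1) / (Real.exp ε - 1)))) * (cl - θ)
            + (1 / ((cu - cl) * ((Real.exp ε + 1) / (Real.exp ε - 1)))) / (α/σ))
              * Real.exp (-(α/σ * (cl - θ))) / (α/σ)
          - ((1/2 + (θ - (cu + cl)/2) / ((cu - cl) * ((Real.exp ε + 1) / (Real.exp ε - 1))))
            + (1 / ((cu - cl) * ((Real.exp ε + 1) / (Real.exp ε - 1)))) * (cu - θ)
            + (1 / ((cu - cl) * ((Real.exp ε + 1) / (Real.exp ε - 1)))) / (α/σ))
              * Real.exp (-(α/σ * (cu - θ))) / (α/σ)) := by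
    rw [setIntegral_congr_fun measurableSet_Ioc
      (g := fun z => (α * (1 - α) / σ) *
        (((1/2 + (θ - (cu + cl)/2) / ((cu - cl) * ((Real.exp ε + 1) / (Real.exp ε - 1))))
          + (1 / ((cu - cl) * ((Real.exp ε + 1) / (Real.exp ε - 1)))) * z)
          * Real.exp (-(α/σ * z))))
      (fun z hz => by
        obtain ⟨hz1, hz2⟩ := hz
        rw [trunc_mid (show cl < z + θ by linarith) (show z + θ ≤ cu by linarith),
          aLap0_of_pos hσ (lt_of_le_of_lt ha0 hz1), bitp]
        ring)]
    rw [integral_const_mul, integral_linexp_Ioc hr hab.le]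
  have hI3 : ∫ z in Ioi (cu - θ), bitp ε cl cu (trunc cl cu (z + θ)) * aLap α 0 σ z
      = bitp ε cl cu cu * ((α * (1 - α) / σ) * (Real.exp (-(α/σ * (cu - θ))) / (α/σ))) := by
    rw [setIntegral_congr_fun measurableSet_Ioi
      (g := fun z => bitp ε cl cu cu * ((α * (1 - α) / σ) * Real.exp (-(α/σ * z))))
      (fun z hz => by
        simp only [mem_Ioi] at hz
        rw [trunc_hi hcl (show cu ≤ z + θ by linarith),
          aLap0_of_pos hσ (lt_of_le_of_lt ha0 (lt_trans hab hz))])]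
    rw [integral_const_mul, integral_const_mul, integral_expNeg_Ioi hr]
  -- assemble the value of Psi
  have hval : Psi α σ ε cl cu θ =
      (∫ z in Iic (cl - θ), bitp ε cl cu (trunc cl cu (z + θ)) * aLap α 0 σ z)
      + ((∫ z in Ioc (cl - θ) (cu - θ), bitp ε cl cu (trunc cl cu (z + θ)) * aLap α 0 σ z)
        + ∫ z in Ioi (cu - θ), bitp ε cl cu (trunc cl cu (z + θ)) * aLap α 0 σ z) := by
    rw [psi_repr θ]
    rw [← intervalIntegral.integral_Iic_add_Ioi (F_int θ).integrableOn (F_int θ).integrableOn]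
    congr 1
    rw [← Ioc_union_Ioi_eq_Ioi hab.le,
      setIntegral_union (Ioc_disjoint_Ioi le_rfl) measurableSet_Ioi
        ((F_int θ).integrableOn) ((F_int θ).integrableOn)]
  refine ⟨?_, ⟨?_, ?_, ?_⟩⟩
  · -- the closed form
    rw [hval, hI1, hI2, hI3, bitp, bitp]
    have hcc : cu - cl ≠ 0 := sub_ne_zero.mpr hcl.ne'
    generalize Real.exp (-(α/σ * (cl - θ))) = e1
    generalize Real.exp (-(α/σ * (cu - θ))) = e2
    generalize hg3 : (Real.exp ε + 1)/(Real.exp ε - 1) = C at hC0 hk ⊢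
    field_simp
    ring
  · -- the derivative
    have hgoal : (1 - α) / (((Real.exp ε + 1) / (Real.exp ε - 1)) * (cu - cl)) *
        (Real.exp (-(α/σ * (cl - θ))) - Real.exp (-(α/σ * (cu - θ))))
        = (α * (1 - α) / σ) / ((cu - cl) * ((Real.exp ε + 1) / (Real.exp ε - 1)))
          * (Real.exp (-(α/σ * (cl - θ))) / (α/σ) - Real.exp (-(α/σ * (cu - θ))) / (α/σ)) := by
      have hcc : cu - cl ≠ 0 := sub_ne_zero.mpr hcl.ne'
      generalize Real.exp (-(α/σ * (cl - θ))) = e1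
      generalize Real.exp (-(α/σ * (cu - θ))) = e2
      generalize hg3 : (Real.exp ε + 1)/(Real.exp ε - 1) = C at hC0 hk ⊢
      field_simp
    rw [hgoal, ← hIoo_val]
    exact hPsiD
  · -- positivity
    exact mul_pos (div_pos hα1' (mul_pos hC0 (by linarith))) (by linarith)
  · -- strict upper bound
    have hcoef : 0 < (1 - α) / (((Real.exp ε + 1) / (Real.exp ε - 1)) * (cu - cl)) :=
      div_pos hα1' (mul_pos hC0 (by linarith))
    have h1 : Real.exp (-(α/σ * (cl - θ))) - Real.exp (-(α/σ * (cu - θ))) < 1 := by linarith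
    nlinarith
end
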